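/- Let d ≥ 1, let n ∈ ℝ^d, and let x ∈ ℝ^d with P x ≠ 0. Then the function f : ℝ^d → ℝ defined by f(z) = ⟪n, P z / ‖P z‖⟫ is differentiable at x, and its gradient at x equals (1/‖P x‖) · P( n − (⟪P x, n⟫/‖P x‖²)·P x ). -/

import Mathlib

open scoped RealInnerProductSpace

/-- The all-ones vector `𝟙 ∈ ℝ^d`. -/
noncomputable def allOnes (d : ℕ) : EuclideanSpace ℝ (Fin d) :=
  (WithLp.equiv 2 (Fin d → ℝ)).symm (fun _ => 1)

/-- The mean-centering map `P x = x − ((∑ i, x i)/d) • 𝟙`, the orthogonal projection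
onto the hyperplane orthogonal to `𝟙`. -/
noncomputable def meanCenter {d : ℕ} (x : EuclideanSpace ℝ (Fin d)) :
    EuclideanSpace ℝ (Fin d) :=
  x - ((∑ i, x i) / d) • allOnes d

/-!
At `y ≠ 0`, the product rule with `∇‖·‖ = ‖y‖⁻¹ y` gives
`∇ ⟪n, z/‖z‖⟫ = ‖y‖⁻¹ (n - (⟪y, n⟫/‖y‖²) y)`. The mean-centering map `P` is the orthogonal
projection onto `𝟙ᗮ`, hence self-adjoint, so the chain rule reads
`∇(g ∘ P) x = P† (∇g (P x)) = P (∇g (P x))`.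
-/

open InnerProductSpace

section Normalize

variable {E : Type*} [NormedAddCommGroup E] [InnerProductSpace ℝ E] [CompleteSpace E]

theorem hasGradientAt_norm {y : E} (hy : y ≠ 0) : HasGradientAt (‖·‖) (‖y‖⁻¹ • y) y := by
  have h := (hasStrictFDerivAt_norm_sq y).hasFDerivAt.sqrt (pow_ne_zero 2 (norm_ne_zero_iff.mpr hy))
  simp only [Real.sqrt_sq (norm_nonneg _)] at h
  rw [hasGradientAt_iff_hasFDerivAt]
  refine h.congr_fderiv (ContinuousLinearMap.ext fun v => ?_)
  simp only [one_div, mul_inv_rev, smul_apply, coe_innerSL_apply, nsmul_eq_mul, Nat.cast_ofNat,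
    smul_eq_mul, map_smul, toDual_apply_apply]
  ring

theorem hasGradientAt_inner_inv_norm_smul (n : E) {y : E} (hy : y ≠ 0) :
    HasGradientAt (fun z => ⟪n, ‖z‖⁻¹ • z⟫) (‖y‖⁻¹ • (n - (⟪y, n⟫ / ‖y‖ ^ 2) • y)) y := by
  have hy' : ‖y‖ ≠ 0 := norm_ne_zero_iff.mpr hy
  have hnorm := hasGradientAt_iff_hasFDerivAt.mp (hasGradientAt_norm hy)
  have hinv := (hasDerivAt_inv hy').comp_hasFDerivAt y hnorm
  have hprod := hinv.mul ((innerSL ℝ n).hasFDerivAt (x := y))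
  simp only [real_inner_smul_right]
  rw [hasGradientAt_iff_hasFDerivAt]
  refine hprod.congr_fderiv (ContinuousLinearMap.ext fun v => ?_)
  simp only [Function.comp_apply, coe_innerSL_apply, map_smul, neg_smul, smul_neg, add_apply,
    smul_apply, smul_eq_mul, neg_apply, toDual_apply_apply, real_inner_comm, map_sub, sub_apply]
  field_simp
  ring

end Normalize

theorem HasGradientAt.comp_continuousLinearMap {E F : Type*} [NormedAddCommGroup E]
    [InnerProductSpace ℝ E] [CompleteSpace E] [NormedAddCommGroup F] [InnerProductSpace ℝ F]
    [CompleteSpace F] {g : E → ℝ} {g' : E} (A : F →L[ℝ] E) {x : F}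
    (hg : HasGradientAt g g' (A x)) :
    HasGradientAt (g ∘ A) (ContinuousLinearMap.adjoint A g') x := by
  rw [hasGradientAt_iff_hasFDerivAt] at hg ⊢
  refine (hg.comp x A.hasFDerivAt).congr_fderiv (ContinuousLinearMap.ext fun v => ?_)
  simp [ContinuousLinearMap.adjoint_inner_left]

theorem norm_allOnes_sq (d : ℕ) : ‖allOnes d‖ ^ 2 = d := by
  simp [EuclideanSpace.norm_sq_eq, allOnes]

theorem inner_allOnes {d : ℕ} (z : EuclideanSpace ℝ (Fin d)) : ⟪allOnes d, z⟫ = ∑ i, z i := by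
  simp [PiLp.inner_apply, allOnes]

theorem meanCenter_eq_starProjection {d : ℕ} (z : EuclideanSpace ℝ (Fin d)) :
    meanCenter z = (ℝ ∙ allOnes d)ᗮ.starProjection z := by
  rw [Submodule.starProjection_orthogonal, sub_apply, Submodule.starProjection_singleton,
    inner_allOnes, norm_allOnes_sq]
  rfl

theorem gradient_layerNorm_observable_general {d : ℕ}
    (n x : EuclideanSpace ℝ (Fin d)) (hx : meanCenter x ≠ 0) :
    DifferentiableAt ℝ (fun z => ⟪n, (‖meanCenter z‖)⁻¹ • meanCenter z⟫) x ∧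
    gradient (fun z => ⟪n, (‖meanCenter z‖)⁻¹ • meanCenter z⟫) x
      = (‖meanCenter x‖)⁻¹ •
        meanCenter (n - (⟪meanCenter x, n⟫ / ‖meanCenter x‖ ^ 2) • meanCenter x) := by
  set P := (ℝ ∙ allOnes d)ᗮ.starProjection
  have hP : (meanCenter : EuclideanSpace ℝ (Fin d) → _) = P := funext meanCenter_eq_starProjection
  rw [hP] at hx ⊢
  have h := (hasGradientAt_inner_inv_norm_smul n hx).comp_continuousLinearMap P
  rw [(isSelfAdjoint_starProjection _).adjoint_eq, map_smul] at h
  exact ⟨h.differentiableAt, h.gradient⟩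

/-- **Gradient of an observable composed with LayerNorm** (key computation in the
proof of Theorem 1): `z ↦ ⟪n, P z/‖P z‖⟫` is differentiable at `x` (when `P x ≠ 0`)
with gradient `(1/‖P x‖) • P (n − (⟪P x, n⟫/‖P x‖²) • P x)`. -/
theorem gradient_layerNorm_observable {d : ℕ} (hd : 1 ≤ d)
    (n x : EuclideanSpace ℝ (Fin d)) (hx : meanCenter x ≠ 0) :
    DifferentiableAt ℝ (fun z => ⟪n, (‖meanCenter z‖)⁻¹ • meanCenter z⟫) x ∧
    gradient (fun z => ⟪n, (‖meanCenter z‖)⁻¹ • meanCenter z⟫) x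
      = (‖meanCenter x‖)⁻¹ •
        meanCenter (n - (⟪meanCenter x, n⟫ / ‖meanCenter x‖ ^ 2) • meanCenter x) :=
  gradient_layerNorm_observable_general n x hx
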